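/- (Accuracy of the soft-min MFG fixed point.) Under Assumption (Lip), L_p < |𝒳|c_min, and 0 < φ < φ_max, suppose there is a unique triple (μ̂, Q*_{μ̂}, π̂) with π̂ = argmin_e Q*_{μ̂}, μ̂ = P^{π̂,μ̂}μ̂, and Q*_{μ̂} the unique fixed point of B_{μ̂}. Let δ > 0 be the action gap of Q*_{μ̂} and assume φ_max − 1/δ > 0. Then ‖μ*φ − μ̂‖₁ ≤ 2√|𝒜|·(1−γ)·exp(−φδ) / ((L_f + (γ/(1−γ))L_p‖f‖∞)(φ_max − φ)) and ‖Q*_{μ*φ} − Q*_{μ̂}‖∞ ≤ 2√|𝒜|·exp(−φδ)/(φ_max − φ), where μ*φ is the unique fixed point of μ ↦ P^{softmin_φ Q*_μ, μ}μ. -/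

import Mathlib

open Finset Filter
open scoped Classical

noncomputable section

variable {X A : Type*}

/-- A probability vector on a finite set. -/
def IsProb [Fintype X] (μ : X → ℝ) : Prop := (∀ x, 0 ≤ μ x) ∧ ∑ x, μ x = 1

/-- ℓ¹ norm of a signed measure / vector on a finite set. -/
def l1 [Fintype X] (μ : X → ℝ) : ℝ := ∑ x, |μ x|

/-- Sup norm of a Q-table. -/
def supQ [Fintype X] [Fintype A] [Nonempty X] [Nonempty A] (Q : X → A → ℝ) : ℝ :=
  Finset.univ.sup' Finset.univ_nonempty (fun xa : X × A => |Q xa.1 xa.2|)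

/-- Minimum of a row of a Q-table (minimum over actions). -/
def minRow [Fintype A] [Nonempty A] (q : A → ℝ) : ℝ :=
  Finset.univ.inf' Finset.univ_nonempty q

/-- The soft-min distribution over actions with parameter φ. -/
def softmin [Fintype A] (φ : ℝ) (z : A → ℝ) (a : A) : ℝ :=
  Real.exp (-φ * z a) / ∑ a', Real.exp (-φ * z a')

/-- The argmin_e policy: uniform over the minimizers, zero elsewhere. -/
def argminE [Fintype A] [Nonempty A] (q : A → ℝ) (a : A) : ℝ :=
  if q a = minRow q then (1 : ℝ) / (Finset.univ.filter fun a' => q a' = minRow q).card else 0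

/-- (P^{π,μ} ν)(x) = ∑_{x'} ν(x') ∑_a π(a|x') p(x|x',a,μ). -/
def Ppush [Fintype X] [Fintype A] (p : X → A → (X → ℝ) → X → ℝ)
    (π : X → A → ℝ) (μ ν : X → ℝ) (x : X) : ℝ :=
  ∑ x', ν x' * ∑ a, π x' a * p x' a μ x

/-- P₂(Q,μ) = P^{softmin_φ Q, μ} μ − μ. -/
def P2 [Fintype X] [Fintype A] (φ : ℝ) (p : X → A → (X → ℝ) → X → ℝ)
    (Q : X → A → ℝ) (μ : X → ℝ) (x : X) : ℝ :=
  Ppush p (fun x' => softmin φ (Q x')) μ μ x - μ x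

/-- The Bellman operator (B_μ Q)(x,a) = f(x,a,μ) + γ ∑_{x'} p(x'|x,a,μ) min_{a'} Q(x',a'). -/
def bell [Fintype X] [Fintype A] [Nonempty A]
    (f : X → A → (X → ℝ) → ℝ) (p : X → A → (X → ℝ) → X → ℝ) (γ : ℝ)
    (μ : X → ℝ) (Q : X → A → ℝ) (x : X) (a : A) : ℝ :=
  f x a μ + γ * ∑ x', p x a μ x' * minRow (Q x')

/-- T₂(Q,μ) = B_μ Q − Q. -/
def T2 [Fintype X] [Fintype A] [Nonempty A]
    (f : X → A → (X → ℝ) → ℝ) (p : X → A → (X → ℝ) → X → ℝ) (γ : ℝ)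
    (Q : X → A → ℝ) (μ : X → ℝ) (x : X) (a : A) : ℝ :=
  bell f p γ μ Q x a - Q x a

/-
Write d = ‖μ*_φ − μ̂‖₁ and K = (L_f + γ/(1−γ) L_p ‖f‖∞)/(1−γ). Since B_μ is a γ-contraction and
‖Q*_μ‖∞ ≤ ‖f‖∞/(1−γ), the map μ ↦ Q*_μ is K-Lipschitz, so ‖Q*_{μ*_φ} − Q*_{μ̂}‖∞ ≤ K d.
Subtracting the two fixed-point equations, μ*_φ − μ̂ splits into four transport differences:
the softmin kernel applied to μ*_φ − μ̂ (a Dobrushin contraction by 1 − |𝒳| c_min, as the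
difference has mass zero), a change of the measure argument of p (at most L_p d), a change of
the Q-table inside softmin (at most |𝒜| φ K d), and softmin versus argmin_e, which the action
gap bounds by 2|𝒜| e^{−φδ}. As |𝒜| K φ_max = |𝒳| c_min − L_p, this rearranges to
d ≤ 2 e^{−φδ} / (K (φ_max − φ)).
-/

lemma IsProb.sum_abs [Fintype X] {w : X → ℝ} (hw : IsProb w) : ∑ x, |w x| = 1 := by
  rw [← hw.2]
  exact Finset.sum_congr rfl fun x _ => abs_of_nonneg (hw.1 x)

lemma abs_sum_mul_le [Fintype X] (w g : X → ℝ) {B : ℝ} (hg : ∀ x, |g x| ≤ B) :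
    |∑ x, w x * g x| ≤ (∑ x, |w x|) * B := by
  rw [Finset.sum_mul]
  refine (Finset.abs_sum_le_sum_abs _ _).trans (Finset.sum_le_sum fun x _ => ?_)
  rw [abs_mul]
  exact mul_le_mul_of_nonneg_left (hg x) (abs_nonneg _)

lemma sum_abs_sum_mul_le [Fintype X] [Fintype A] (w : X → ℝ) (g : X → A → ℝ) {C : ℝ}
    (hg : ∀ x, ∑ a, |g x a| ≤ C) :
    ∑ a, |∑ x, w x * g x a| ≤ (∑ x, |w x|) * C :=
  calc ∑ a, |∑ x, w x * g x a| ≤ ∑ a, ∑ x, |w x| * |g x a| :=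
        Finset.sum_le_sum fun a _ => (Finset.abs_sum_le_sum_abs _ _).trans_eq (by simp [abs_mul])
    _ = ∑ x, |w x| * ∑ a, |g x a| := by rw [Finset.sum_comm]; simp [Finset.mul_sum]
    _ ≤ (∑ x, |w x|) * C := by
        rw [Finset.sum_mul]
        exact Finset.sum_le_sum fun x _ => mul_le_mul_of_nonneg_left (hg x) (abs_nonneg _)

lemma l1_add_le [Fintype X] (μ ν : X → ℝ) : l1 (fun x => μ x + ν x) ≤ l1 μ + l1 ν := by
  rw [l1, l1, l1, ← Finset.sum_add_distrib]
  exact Finset.sum_le_sum fun x _ => abs_add_le _ _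

section Softmin

variable [Fintype A] [Nonempty A]

lemma sum_exp_pos (φ : ℝ) (z : A → ℝ) : 0 < ∑ a, Real.exp (-φ * z a) :=
  Finset.sum_pos (fun _ _ => Real.exp_pos _) univ_nonempty

lemma isProb_softmin (φ : ℝ) (z : A → ℝ) : IsProb (softmin φ z) :=
  ⟨fun _ => div_nonneg (Real.exp_pos _).le (sum_exp_pos φ z).le, by
    simp only [softmin]; rw [← Finset.sum_div, div_self (sum_exp_pos φ z).ne']⟩

lemma softmin_le_exp_neg_mul_sub_minRow (φ : ℝ) (q : A → ℝ) (a : A) :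
    softmin φ q a ≤ Real.exp (-φ * (q a - minRow q)) := by
  obtain ⟨a₀, -, ha₀⟩ := Finset.exists_mem_eq_inf' univ_nonempty q
  have hZ : Real.exp (-φ * minRow q) ≤ ∑ b, Real.exp (-φ * q b) := by
    rw [minRow, ha₀]
    exact Finset.single_le_sum (f := fun b => Real.exp (-φ * q b)) (fun b _ => (Real.exp_pos _).le)
      (mem_univ a₀)
  calc softmin φ q a ≤ Real.exp (-φ * q a) / Real.exp (-φ * minRow q) :=
        div_le_div_of_nonneg_left (Real.exp_pos _).le (Real.exp_pos _) hZ
    _ = Real.exp (-φ * (q a - minRow q)) := by rw [← Real.exp_sub]; ring_nf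

lemma hasDerivAt_softmin_line (φ : ℝ) (q w : A → ℝ) (a : A) (t : ℝ) :
    HasDerivAt (fun s => softmin φ (fun b => q b + s * w b) a)
      (-φ * softmin φ (fun b => q b + t * w b) a
        * (w a - ∑ b, softmin φ (fun b => q b + t * w b) b * w b)) t := by
  have hexp : ∀ b, HasDerivAt (fun s => Real.exp (-φ * (q b + s * w b)))
      (Real.exp (-φ * (q b + t * w b)) * (-φ * w b)) t := fun b =>
    ((((hasDerivAt_id t).mul_const (w b)).const_add (q b)).const_mul (-φ)).exp.congr_deriv
      (by simp)
  have hZ := (sum_exp_pos φ fun b => q b + t * w b).ne'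
  refine ((hexp a).fun_div (HasDerivAt.fun_sum fun b _ => hexp b) hZ).congr_deriv ?_
  simp only [softmin]
  set u := fun b => Real.exp (-φ * (q b + t * w b))
  have hsum : ∑ b, u b * (-φ * w b) = -φ * ∑ b, u b * w b := by
    rw [Finset.mul_sum]; exact Finset.sum_congr rfl fun b _ => by ring
  have hmean : ∑ b, u b / (∑ c, u c) * w b = (∑ b, u b * w b) / ∑ c, u c := by
    rw [Finset.sum_div]; exact Finset.sum_congr rfl fun b _ => by ring
  rw [hsum, hmean]
  field_simp
  ring

lemma sum_abs_softmin_sub_le {φ ε : ℝ} (hφ : 0 ≤ φ) {q q' : A → ℝ}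
    (h : ∀ a, |q a - q' a| ≤ ε) :
    ∑ a, |softmin φ q a - softmin φ q' a| ≤ 2 * φ * ε := by
  set w := fun a => q a - q' a
  set r := fun (t : ℝ) b => q' b + t * w b
  -- pairing with the sign pattern of the endpoint difference reduces the ℓ¹ bound to the mean
  -- value inequality for a scalar function along the segment from `q'` to `q`
  set s := fun a => (SignType.sign (softmin φ q a - softmin φ q' a) : ℝ)
  set g' := fun t => ∑ a, s a * (-φ * softmin φ (r t) a * (w a - ∑ b, softmin φ (r t) b * w b))
  have hderiv : ∀ t, HasDerivAt (fun t => ∑ a, s a * softmin φ (r t) a) (g' t) t := fun t =>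
    HasDerivAt.fun_sum fun a _ => (hasDerivAt_softmin_line φ q' w a t).const_mul (s a)
  have hbound : ∀ t, ‖g' t‖ ≤ 2 * φ * ε := by
    intro t
    set σ := softmin φ (r t)
    have hσ : IsProb σ := isProb_softmin φ (r t)
    have hmean : |∑ b, σ b * w b| ≤ ε := by
      simpa [hσ.sum_abs] using abs_sum_mul_le σ w h
    have hs : ∀ a, |s a| ≤ 1 := fun a => by
      rcases lt_trichotomy (softmin φ q a - softmin φ q' a) 0 with h | h | h <;> simp [s, h]
    calc ‖g' t‖ ≤ ∑ a, |s a * (-φ * σ a * (w a - ∑ b, σ b * w b))| :=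
          Finset.abs_sum_le_sum_abs _ _
      _ ≤ ∑ a, σ a * (2 * φ * ε) := Finset.sum_le_sum fun a _ => by
          rw [abs_mul, abs_mul, abs_mul, abs_neg, abs_of_nonneg hφ, abs_of_nonneg (hσ.1 a)]
          have hφσ := mul_nonneg hφ (hσ.1 a)
          have hdev := (abs_sub _ _).trans (add_le_add (h a) hmean)
          calc |s a| * (φ * σ a * |w a - ∑ b, σ b * w b|) ≤ 1 * (φ * σ a * (ε + ε)) :=
                mul_le_mul (hs a) (mul_le_mul_of_nonneg_left hdev hφσ)
                  (mul_nonneg hφσ (abs_nonneg _)) zero_le_one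
            _ = σ a * (2 * φ * ε) := by ring
      _ = 2 * φ * ε := by rw [← Finset.sum_mul, hσ.2, one_mul]
  have hmvt := norm_image_sub_le_of_norm_deriv_le_segment_01'
    (fun t _ => (hderiv t).hasDerivWithinAt) (fun t _ => hbound t)
  have hr1 : r 1 = q := funext fun b => by simp [r, w]
  have hr0 : r 0 = q' := funext fun b => by simp [r]
  simp only [hr1, hr0, ← Finset.sum_sub_distrib, ← mul_sub, s, sign_mul_self,
    Real.norm_eq_abs] at hmvt
  exact (le_abs_self _).trans hmvt

lemma sum_abs_softmin_sub_le_card {φ ε : ℝ} (hφ : 0 ≤ φ) {q q' : A → ℝ}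
    (h : ∀ a, |q a - q' a| ≤ ε) :
    ∑ a, |softmin φ q a - softmin φ q' a| ≤ Fintype.card A * φ * ε := by
  have hε : 0 ≤ ε := (abs_nonneg _).trans (h (Classical.arbitrary A))
  rcases Nat.lt_or_ge (Fintype.card A) 2 with hA | hA
  · have : Subsingleton A := Fintype.card_le_one_iff_subsingleton.mp (by omega)
    have hone : ∀ z : A → ℝ, ∀ a, softmin φ z a = 1 := fun z a => by
      rw [← (isProb_softmin φ z).2, Fintype.sum_subsingleton _ a]
    simp only [hone, sub_self, abs_zero, Finset.sum_const_zero]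
    positivity
  · calc ∑ a, |softmin φ q a - softmin φ q' a| ≤ 2 * φ * ε := sum_abs_softmin_sub_le hφ h
      _ ≤ Fintype.card A * φ * ε := by gcongr; exact_mod_cast hA

lemma softmin_le_exp_neg_mul_of_gap {φ δ : ℝ} (hφ : 0 ≤ φ) {q : A → ℝ}
    (hgap : ∀ a, minRow q < q a → minRow q + δ ≤ q a) {a : A} (ha : q a ≠ minRow q) :
    softmin φ q a ≤ Real.exp (-φ * δ) := by
  have hδ := hgap a (lt_of_le_of_ne (Finset.inf'_le _ (mem_univ a)) ha.symm)
  refine (softmin_le_exp_neg_mul_sub_minRow φ q a).trans (Real.exp_le_exp.2 ?_)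
  nlinarith

lemma sum_abs_softmin_sub_argminE_le {φ δ : ℝ} (hφ : 0 ≤ φ) {q : A → ℝ}
    (hgap : ∀ a, minRow q < q a → minRow q + δ ≤ q a) :
    ∑ a, |softmin φ q a - argminE q a| ≤ 2 * Fintype.card A * Real.exp (-φ * δ) := by
  set S := Finset.univ.filter fun a => q a = minRow q
  set σ := softmin φ q
  have hσ : IsProb σ := isProb_softmin φ q
  have hS : (0 : ℝ) < #S := by
    obtain ⟨a₀, -, ha₀⟩ := Finset.exists_mem_eq_inf' univ_nonempty q
    exact Nat.cast_pos.2 (Finset.card_pos.2 ⟨a₀, by simp [S, minRow, ha₀]⟩)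
  have hσS : ∀ a ∈ S, σ a = Real.exp (-φ * minRow q) / ∑ b, Real.exp (-φ * q b) := by
    intro a ha
    simp only [σ, softmin, (Finset.mem_filter.1 ha).2]
  have hSc : ∀ a ∈ Sᶜ, q a ≠ minRow q := fun a ha h =>
    Finset.mem_compl.1 ha (Finset.mem_filter.2 ⟨mem_univ a, h⟩)
  have hsplit : ∑ a ∈ S, σ a + ∑ a ∈ Sᶜ, σ a = 1 := by rw [Finset.sum_add_sum_compl, hσ.2]
  have hin : ∑ a ∈ S, |σ a - argminE q a| = ∑ a ∈ Sᶜ, σ a := by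
    have hπS : ∀ a ∈ S, argminE q a = 1 / #S := fun a ha => if_pos (Finset.mem_filter.1 ha).2
    set c := Real.exp (-φ * minRow q) / ∑ b, Real.exp (-φ * q b)
    have hmass : ∑ a ∈ S, σ a = #S * c := by
      rw [Finset.sum_congr rfl hσS, Finset.sum_const, nsmul_eq_mul]
    calc ∑ a ∈ S, |σ a - argminE q a| = #S * |c - 1 / #S| := by
          rw [Finset.sum_congr rfl fun a ha => by rw [hσS a ha, hπS a ha], Finset.sum_const,
            nsmul_eq_mul]
      _ = |∑ a ∈ S, σ a - 1| := by
          rw [hmass, show (#S : ℝ) * c - 1 = #S * (c - 1 / #S) by field_simp, abs_mul,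
            abs_of_pos hS]
      _ = ∑ a ∈ Sᶜ, σ a := by
          rw [show ∑ a ∈ S, σ a - 1 = -∑ a ∈ Sᶜ, σ a by linarith, abs_neg,
            abs_of_nonneg (Finset.sum_nonneg fun a _ => hσ.1 a)]
  have hout : ∑ a ∈ Sᶜ, |σ a - argminE q a| = ∑ a ∈ Sᶜ, σ a := by
    refine Finset.sum_congr rfl fun a ha => ?_
    rw [show argminE q a = 0 from if_neg (hSc a ha), sub_zero, abs_of_nonneg (hσ.1 a)]
  have hsmall : ∑ a ∈ Sᶜ, σ a ≤ Fintype.card A * Real.exp (-φ * δ) :=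
    calc ∑ a ∈ Sᶜ, σ a ≤ #Sᶜ * Real.exp (-φ * δ) := by
          simpa using Finset.sum_le_sum fun a ha => softmin_le_exp_neg_mul_of_gap hφ hgap (hSc a ha)
      _ ≤ Fintype.card A * Real.exp (-φ * δ) := by
          gcongr; exact Finset.card_le_univ _
  rw [← Finset.sum_add_sum_compl S, hin, hout]
  linarith

end Softmin

section Transport
variable [Fintype X] [Fintype A] {p : X → A → (X → ℝ) → X → ℝ} {π π' : X → A → ℝ} {μ μ' ν : X → ℝ}

lemma Ppush_sub_Ppush_right (ν' : X → ℝ) (y : X) :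
    Ppush p π μ ν y - Ppush p π μ ν' y = Ppush p π μ (fun x => ν x - ν' x) y := by
  simp only [Ppush, ← Finset.sum_sub_distrib, sub_mul]

lemma l1_Ppush_le_of_sum_eq_zero {c : ℝ} {d : X → ℝ} (hπ : ∀ x, IsProb (π x))
    (hp : ∀ x a, IsProb (p x a μ)) (hc : ∀ x a y, c ≤ p x a μ y) (hd : ∑ x, d x = 0) :
    l1 (Ppush p π μ d) ≤ (1 - Fintype.card X * c) * l1 d := by
  set k := fun x y => ∑ a, π x a * p x a μ y
  have hkc : ∀ x y, c ≤ k x y := fun x y =>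
    calc c = ∑ a, π x a * c := by rw [← Finset.sum_mul, (hπ x).2, one_mul]
      _ ≤ k x y := Finset.sum_le_sum fun a _ => mul_le_mul_of_nonneg_left (hc x a y) ((hπ x).1 a)
  have hrow : ∀ x, ∑ y, |k x y - c| = 1 - Fintype.card X * c := fun x => by
    simp only [fun y => abs_of_nonneg (sub_nonneg.2 (hkc x y)), Finset.sum_sub_distrib,
      Finset.sum_const, Finset.card_univ, nsmul_eq_mul, k]
    rw [Finset.sum_comm]
    simp only [← Finset.mul_sum, (hp x _).2, mul_one, (hπ x).2]
  -- the total mass of `d` vanishes, so the kernel may be lowered by `c` everywhere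
  have hshift : ∀ y, Ppush p π μ d y = ∑ x, d x * (k x y - c) := fun y => by
    simp only [mul_sub, Finset.sum_sub_distrib, ← Finset.sum_mul, hd, zero_mul, sub_zero, Ppush, k]
  simp only [l1, hshift]
  rw [mul_comm]
  exact sum_abs_sum_mul_le d _ fun x => (hrow x).le

lemma l1_Ppush_sub_Ppush_le_of_kernel {C : ℝ} (hπ : ∀ x, IsProb (π x)) (hν : IsProb ν)
    (hp : ∀ x a, ∑ y, |p x a μ y - p x a μ' y| ≤ C) :
    l1 (fun y => Ppush p π μ ν y - Ppush p π μ' ν y) ≤ C := by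
  have hrow : ∀ x, ∑ y, |∑ a, π x a * (p x a μ y - p x a μ' y)| ≤ C := fun x =>
    (sum_abs_sum_mul_le _ _ (hp x)).trans_eq (by rw [(hπ x).sum_abs, one_mul])
  refine le_of_eq_of_le ?_ ((sum_abs_sum_mul_le ν _ hrow).trans_eq (by rw [hν.sum_abs, one_mul]))
  simp only [l1, Ppush, mul_sub, Finset.sum_sub_distrib]

lemma l1_Ppush_sub_Ppush_le_of_policy {C : ℝ} (hp : ∀ x a, IsProb (p x a μ)) (hν : IsProb ν)
    (hπ : ∀ x, ∑ a, |π x a - π' x a| ≤ C) :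
    l1 (fun y => Ppush p π μ ν y - Ppush p π' μ ν y) ≤ C := by
  have hrow : ∀ x, ∑ y, |∑ a, (π x a - π' x a) * p x a μ y| ≤ C := fun x =>
    (sum_abs_sum_mul_le _ _ fun a => (hp x a).sum_abs.le).trans_eq (by rw [mul_one]) |>.trans (hπ x)
  refine le_of_eq_of_le ?_ ((sum_abs_sum_mul_le ν _ hrow).trans_eq (by rw [hν.sum_abs, one_mul]))
  simp only [l1, Ppush, sub_mul, mul_sub, Finset.sum_sub_distrib]

end Transport

lemma minRow_le_minRow_add [Fintype A] [Nonempty A] {q q' : A → ℝ} {ε : ℝ}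
    (h : ∀ a, q a ≤ q' a + ε) : minRow q ≤ minRow q' + ε := by
  obtain ⟨a', -, ha'⟩ := Finset.exists_mem_eq_inf' univ_nonempty q'
  calc minRow q ≤ q a' := Finset.inf'_le _ (mem_univ a')
    _ ≤ q' a' + ε := h a'
    _ = minRow q' + ε := by rw [minRow, ha']

lemma abs_minRow_sub_minRow_le [Fintype A] [Nonempty A] {q q' : A → ℝ} {ε : ℝ}
    (h : ∀ a, |q a - q' a| ≤ ε) : |minRow q - minRow q'| ≤ ε := by
  have h₁ := minRow_le_minRow_add fun a => (sub_le_iff_le_add'.1 (le_of_abs_le (h a)))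
  have h₂ := minRow_le_minRow_add (q := q') (q' := q) (ε := ε) fun a => by
    linarith [neg_le_of_abs_le (h a)]
  rw [abs_sub_le_iff]
  constructor <;> linarith

section Bellman
variable [Fintype X] [Fintype A] [Nonempty X] [Nonempty A]

lemma abs_le_supQ (Q : X → A → ℝ) (x : X) (a : A) : |Q x a| ≤ supQ Q :=
  Finset.le_sup' (fun xa : X × A => |Q xa.1 xa.2|) (mem_univ (x, a))

lemma abs_minRow_le_supQ (Q : X → A → ℝ) (x : X) : |minRow (Q x)| ≤ supQ Q := by
  obtain ⟨a, -, ha⟩ := Finset.exists_mem_eq_inf' univ_nonempty (Q x)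
  rw [minRow, ha]
  exact abs_le_supQ Q x a

lemma supQ_le_div_of_le_add_mul {Q : X → A → ℝ} {c γ : ℝ} (hγ : γ < 1)
    (h : ∀ x a, |Q x a| ≤ c + γ * supQ Q) : supQ Q ≤ c / (1 - γ) := by
  have : supQ Q ≤ c + γ * supQ Q := Finset.sup'_le _ _ fun xa _ => h xa.1 xa.2
  rw [le_div_iff₀ (by linarith)]
  linarith

variable {f : X → A → (X → ℝ) → ℝ} {p : X → A → (X → ℝ) → X → ℝ} {γ : ℝ} {μ μ' : X → ℝ}
  {Q Q' : X → A → ℝ}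

lemma supQ_le_of_bell_eq {F : ℝ} (hγ0 : 0 ≤ γ) (hγ1 : γ < 1) (hp : ∀ x a, IsProb (p x a μ))
    (hf : ∀ x a, |f x a μ| ≤ F) (hQ : bell f p γ μ Q = Q) : supQ Q ≤ F / (1 - γ) := by
  refine supQ_le_div_of_le_add_mul hγ1 fun x a => ?_
  have hnext : |∑ y, p x a μ y * minRow (Q y)| ≤ supQ Q :=
    (abs_sum_mul_le _ _ (abs_minRow_le_supQ Q)).trans_eq (by rw [(hp x a).sum_abs, one_mul])
  calc |Q x a| = |f x a μ + γ * ∑ y, p x a μ y * minRow (Q y)| := by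
        rw [← congrFun (congrFun hQ x) a]; rfl
    _ ≤ |f x a μ| + γ * |∑ y, p x a μ y * minRow (Q y)| := by
        rw [← abs_of_nonneg hγ0, ← abs_mul, abs_of_nonneg hγ0]; exact abs_add_le _ _
    _ ≤ F + γ * supQ Q := by gcongr; exact hf x a

lemma supQ_sub_le_of_bell_eq {εf εp B : ℝ} (hγ0 : 0 ≤ γ) (hγ1 : γ < 1)
    (hp' : ∀ x a, IsProb (p x a μ')) (hf : ∀ x a, |f x a μ - f x a μ'| ≤ εf)
    (hp : ∀ x a, ∑ y, |p x a μ y - p x a μ' y| ≤ εp) (hB : supQ Q ≤ B)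
    (hQ : bell f p γ μ Q = Q) (hQ' : bell f p γ μ' Q' = Q') :
    supQ (fun x a => Q x a - Q' x a) ≤ (εf + γ * (εp * B)) / (1 - γ) := by
  have hB0 : 0 ≤ B := (abs_nonneg _).trans ((abs_le_supQ Q (Classical.arbitrary X)
    (Classical.arbitrary A)).trans hB)
  refine supQ_le_div_of_le_add_mul hγ1 fun x a => ?_
  have hkernel : |∑ y, (p x a μ y - p x a μ' y) * minRow (Q y)| ≤ εp * B :=
    (abs_sum_mul_le _ _ fun y => (abs_minRow_le_supQ Q y).trans hB).trans
      (mul_le_mul_of_nonneg_right (hp x a) hB0)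
  have hvalue : |∑ y, p x a μ' y * (minRow (Q y) - minRow (Q' y))|
      ≤ supQ (fun x a => Q x a - Q' x a) :=
    (abs_sum_mul_le _ _ fun y => abs_minRow_sub_minRow_le fun b =>
      abs_le_supQ (fun x a => Q x a - Q' x a) y b).trans_eq (by rw [(hp' x a).sum_abs, one_mul])
  have hsplit : Q x a - Q' x a = (f x a μ - f x a μ') + γ *
      (∑ y, (p x a μ y - p x a μ' y) * minRow (Q y)
        + ∑ y, p x a μ' y * (minRow (Q y) - minRow (Q' y))) := by
    rw [← congrFun (congrFun hQ x) a, ← congrFun (congrFun hQ' x) a]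
    simp only [bell, sub_mul, mul_sub, Finset.sum_sub_distrib]
    ring
  calc |Q x a - Q' x a| ≤ εf + γ * (εp * B + supQ (fun x a => Q x a - Q' x a)) := by
        rw [hsplit]
        refine (abs_add_le _ _).trans (add_le_add (hf x a) ?_)
        rw [abs_mul, abs_of_nonneg hγ0]
        gcongr
        exact (abs_add_le _ _).trans (add_le_add hkernel hvalue)
    _ = εf + γ * (εp * B) + γ * supQ (fun x a => Q x a - Q' x a) := by ring

end Bellman

lemma l1_sub_le_of_fixedPoints [Fintype X] [Fintype A] [Nonempty A]
    {p : X → A → (X → ℝ) → X → ℝ} {Q Q' : X → A → ℝ} {μ ν : X → ℝ} {φ δ ε c Lp : ℝ}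
    (hφ : 0 ≤ φ) (hμ : IsProb μ) (hν : IsProb ν) (hpμ : ∀ x a, IsProb (p x a μ))
    (hpν : ∀ x a, IsProb (p x a ν)) (hc : ∀ x a y, c ≤ p x a μ y)
    (hLp : ∀ x a, ∑ y, |p x a μ y - p x a ν y| ≤ Lp * l1 (fun y => μ y - ν y))
    (hQ : ∀ x a, |Q x a - Q' x a| ≤ ε)
    (hgap : ∀ x a, minRow (Q' x) < Q' x a → minRow (Q' x) + δ ≤ Q' x a)
    (hμfix : Ppush p (fun x => softmin φ (Q x)) μ μ = μ)
    (hνfix : Ppush p (fun x => argminE (Q' x)) ν ν = ν) :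
    l1 (fun y => μ y - ν y) ≤ (1 - Fintype.card X * c) * l1 (fun y => μ y - ν y)
      + Lp * l1 (fun y => μ y - ν y) + Fintype.card A * φ * ε
      + 2 * Fintype.card A * Real.exp (-φ * δ) := by
  set σ := fun x => softmin φ (Q x)
  set σ' := fun x => softmin φ (Q' x)
  set π := fun x => argminE (Q' x)
  have hσ : ∀ x, IsProb (σ x) := fun x => isProb_softmin φ (Q x)
  have h₁ := l1_Ppush_le_of_sum_eq_zero (d := fun y => μ y - ν y) hσ hpμ hc
    (by rw [Finset.sum_sub_distrib, hμ.2, hν.2, sub_self])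
  have h₂ := l1_Ppush_sub_Ppush_le_of_kernel hσ hν hLp
  have h₃ := l1_Ppush_sub_Ppush_le_of_policy (π := σ) (π' := σ') hpν hν
    fun x => sum_abs_softmin_sub_le_card hφ (hQ x)
  have h₄ := l1_Ppush_sub_Ppush_le_of_policy (π := σ') (π' := π) hpν hν
    fun x => sum_abs_softmin_sub_argminE_le hφ (hgap x)
  have hdecomp : (fun y => μ y - ν y) = fun y => Ppush p σ μ (fun x => μ x - ν x) y
      + (Ppush p σ μ ν y - Ppush p σ ν ν y) + (Ppush p σ ν ν y - Ppush p σ' ν ν y)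
      + (Ppush p σ' ν ν y - Ppush p π ν ν y) := funext fun y => by
    rw [← Ppush_sub_Ppush_right]
    linarith [congrFun hμfix y, congrFun hνfix y]
  have ht₁ := l1_add_le (fun y => Ppush p σ μ (fun x => μ x - ν x) y
      + (Ppush p σ μ ν y - Ppush p σ ν ν y) + (Ppush p σ ν ν y - Ppush p σ' ν ν y))
    (fun y => Ppush p σ' ν ν y - Ppush p π ν ν y)
  have ht₂ := l1_add_le (fun y => Ppush p σ μ (fun x => μ x - ν x) y
      + (Ppush p σ μ ν y - Ppush p σ ν ν y)) (fun y => Ppush p σ ν ν y - Ppush p σ' ν ν y)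
  have ht₃ := l1_add_le (Ppush p σ μ (fun x => μ x - ν x))
    (fun y => Ppush p σ μ ν y - Ppush p σ ν ν y)
  linarith [congrArg l1 hdecomp]

theorem mfg_accuracy_general [Fintype X] [Fintype A] [Nonempty X] [Nonempty A]
    (γ : ℝ) (hγ0 : 0 < γ) (hγ1 : γ < 1)
    (f : X → A → (X → ℝ) → ℝ) (fnorm : ℝ)
    (hf : ∀ x a μ, IsProb μ → |f x a μ| ≤ fnorm)
    (p : X → A → (X → ℝ) → X → ℝ)
    (hp0 : ∀ x a μ x', IsProb μ → 0 ≤ p x a μ x')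
    (hp1 : ∀ x a μ, IsProb μ → ∑ x', p x a μ x' = 1)
    (cmin Lf Lp : ℝ)
    (hcmin : ∀ x a μ x', IsProb μ → cmin ≤ p x a μ x')
    (hLf : ∀ x a μ μ', IsProb μ → IsProb μ' →
      |f x a μ - f x a μ'| ≤ Lf * l1 (fun y => μ y - μ' y))
    (hLp : ∀ x a μ μ', IsProb μ → IsProb μ' →
      ∑ x', |p x a μ x' - p x a μ' x'| ≤ Lp * l1 (fun y => μ y - μ' y))
    (hLpc : Lp < (Fintype.card X : ℝ) * cmin)
    (φmax : ℝ)
    (hφmaxdef : φmax = ((Fintype.card X : ℝ) * cmin - Lp) / (Fintype.card A : ℝ)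
        * ((1 - γ) / (Lf + (γ / (1 - γ)) * Lp * fnorm)))
    (φ : ℝ) (hφ0 : 0 < φ) (hφmax : φ < φmax)
    -- Q*_μ : the unique fixed point of B_μ
    (Qstar : (X → ℝ) → X → A → ℝ)
    (hQstar : ∀ μ, IsProb μ → bell f p γ μ (Qstar μ) = Qstar μ)
    -- the unique MFG equilibrium (μ̂, Q*_{μ̂}, π̂) with π̂ = argmin_e Q*_{μ̂}
    (μhat : X → ℝ) (hμhat : IsProb μhat)
    (hμhatfix : Ppush p (fun x' => argminE (Qstar μhat x')) μhat μhat = μhat)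
    -- δ is (a positive lower bound for) the action gap of Q*_{μ̂}
    (δ : ℝ)
    (hgap : ∀ x a, minRow (Qstar μhat x) < Qstar μhat x a →
      minRow (Qstar μhat x) + δ ≤ Qstar μhat x a)
    -- μ*φ : the unique fixed point of μ ↦ P^{softmin_φ Q*_μ, μ} μ
    (μstar : X → ℝ) (hμstar : IsProb μstar)
    (hμstarfix : Ppush p (fun x' => softmin φ (Qstar μstar x')) μstar μstar = μstar) :
    l1 (fun x => μstar x - μhat x)
        ≤ 2 * Real.sqrt (Fintype.card A) * (1 - γ) * Real.exp (-φ * δ)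
            / ((Lf + (γ / (1 - γ)) * Lp * fnorm) * (φmax - φ))
    ∧ supQ (fun x a => Qstar μstar x a - Qstar μhat x a)
        ≤ 2 * Real.sqrt (Fintype.card A) * Real.exp (-φ * δ) / (φmax - φ) := by
  have h1γ : 0 < 1 - γ := by linarith
  have hpμ : ∀ μ, IsProb μ → ∀ x a, IsProb (p x a μ) := fun μ hμ x a =>
    ⟨fun y => hp0 x a μ y hμ, hp1 x a μ hμ⟩
  set D := Lf + (γ / (1 - γ)) * Lp * fnorm
  set K := D / (1 - γ) with hK
  set d := l1 (fun x => μstar x - μhat x)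
  set E := Real.exp (-φ * δ)
  have hcA : (0 : ℝ) < Fintype.card A := Nat.cast_pos.2 Fintype.card_pos
  have hD : 0 < D := by
    have : 0 < ((Fintype.card X : ℝ) * cmin - Lp) / Fintype.card A * ((1 - γ) / D) := by
      rw [← hφmaxdef]; linarith
    exact (div_pos_iff_of_pos_left h1γ).1 (pos_of_mul_pos_right this (by
      have := sub_pos.2 hLpc; positivity))
  have hQ : supQ (fun x a => Qstar μstar x a - Qstar μhat x a) ≤ K * d :=
    (supQ_sub_le_of_bell_eq hγ0.le hγ1 (hpμ _ hμhat) (fun x a => hLf x a _ _ hμstar hμhat)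
      (fun x a => hLp x a _ _ hμstar hμhat)
      (supQ_le_of_bell_eq hγ0.le hγ1 (hpμ _ hμstar) (fun x a => hf x a _ hμstar)
        (hQstar _ hμstar))
      (hQstar _ hμstar) (hQstar _ hμhat)).trans_eq (by rw [hK]; ring)
  have hd : d ≤ (1 - Fintype.card X * cmin) * d + Lp * d
      + Fintype.card A * φ * (K * d) + 2 * Fintype.card A * E :=
    l1_sub_le_of_fixedPoints hφ0.le hμstar hμhat (hpμ _ hμstar) (hpμ _ hμhat)
    (fun x a y => hcmin x a _ y hμstar) (fun x a => hLp x a _ _ hμstar hμhat)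
    (fun x a => (abs_le_supQ _ x a).trans hQ) hgap hμstarfix hμhatfix
  have hkey : d * (K * (φmax - φ)) ≤ 2 * E := by
    have hφmaxK : Fintype.card A * K * φmax = Fintype.card X * cmin - Lp := by
      rw [hφmaxdef, hK]; field_simp
    refine le_of_mul_le_mul_left ?_ hcA
    linarith [show Fintype.card A * (d * (K * (φmax - φ)))
      = d * (Fintype.card X * cmin - Lp) - Fintype.card A * φ * (K * d) by
        rw [← hφmaxK]; ring]
  have hsqrt : 2 * E ≤ 2 * Real.sqrt (Fintype.card A) * E := by
    have := Real.one_le_sqrt.2 (Nat.one_le_cast.2 (Fintype.card_pos (α := A)))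
    nlinarith [Real.exp_pos (-φ * δ)]
  have hφφ : 0 < φmax - φ := sub_pos.2 hφmax
  constructor
  · rw [le_div_iff₀ (by positivity)]
    calc d * (D * (φmax - φ)) = (1 - γ) * (d * (K * (φmax - φ))) := by rw [hK]; field_simp
      _ ≤ 2 * Real.sqrt (Fintype.card A) * (1 - γ) * E := by nlinarith
  · rw [le_div_iff₀ hφφ]
    nlinarith

/-- accuracy of the soft-min MFG fixed point:
‖μ*φ − μ̂‖₁ ≤ 2√|𝒜|(1−γ)exp(−φδ)/((L_f + (γ/(1−γ))L_p‖f‖∞)(φ_max − φ)) and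
‖Q*_{μ*φ} − Q*_{μ̂}‖∞ ≤ 2√|𝒜|exp(−φδ)/(φ_max − φ). -/
theorem mfg_accuracy [Fintype X] [Fintype A] [Nonempty X] [Nonempty A]
    (γ : ℝ) (hγ0 : 0 < γ) (hγ1 : γ < 1)
    (f : X → A → (X → ℝ) → ℝ) (fnorm : ℝ)
    (hf : ∀ x a μ, IsProb μ → |f x a μ| ≤ fnorm)
    (p : X → A → (X → ℝ) → X → ℝ)
    (hp0 : ∀ x a μ x', IsProb μ → 0 ≤ p x a μ x')
    (hp1 : ∀ x a μ, IsProb μ → ∑ x', p x a μ x' = 1)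
    (cmin Lf Lp : ℝ) (hcmin0 : 0 ≤ cmin)
    (hcmin : ∀ x a μ x', IsProb μ → cmin ≤ p x a μ x')
    (hLf0 : 0 ≤ Lf) (hLp0 : 0 ≤ Lp)
    (hLf : ∀ x a μ μ', IsProb μ → IsProb μ' →
      |f x a μ - f x a μ'| ≤ Lf * l1 (fun y => μ y - μ' y))
    (hLp : ∀ x a μ μ', IsProb μ → IsProb μ' →
      ∑ x', |p x a μ x' - p x a μ' x'| ≤ Lp * l1 (fun y => μ y - μ' y))
    (hLpc : Lp < (Fintype.card X : ℝ) * cmin)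
    (φmax : ℝ)
    (hφmaxdef : φmax = ((Fintype.card X : ℝ) * cmin - Lp) / (Fintype.card A : ℝ)
        * ((1 - γ) / (Lf + (γ / (1 - γ)) * Lp * fnorm)))
    (φ : ℝ) (hφ0 : 0 < φ) (hφmax : φ < φmax)
    -- Q*_μ : the unique fixed point of B_μ
    (Qstar : (X → ℝ) → X → A → ℝ)
    (hQstar : ∀ μ, IsProb μ → bell f p γ μ (Qstar μ) = Qstar μ)
    -- the unique MFG equilibrium (μ̂, Q*_{μ̂}, π̂) with π̂ = argmin_e Q*_{μ̂}
    (μhat : X → ℝ) (hμhat : IsProb μhat)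
    (hμhatfix : Ppush p (fun x' => argminE (Qstar μhat x')) μhat μhat = μhat)
    (huniq : ∀ μ : X → ℝ, IsProb μ →
      Ppush p (fun x' => argminE (Qstar μ x')) μ μ = μ → μ = μhat)
    -- δ is (a positive lower bound for) the action gap of Q*_{μ̂}
    (δ : ℝ) (hδ0 : 0 < δ)
    (hgap : ∀ x a, minRow (Qstar μhat x) < Qstar μhat x a →
      minRow (Qstar μhat x) + δ ≤ Qstar μhat x a)
    (hφδ : 0 < φmax - 1 / δ)
    -- μ*φ : the unique fixed point of μ ↦ P^{softmin_φ Q*_μ, μ} μ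
    (μstar : X → ℝ) (hμstar : IsProb μstar)
    (hμstarfix : Ppush p (fun x' => softmin φ (Qstar μstar x')) μstar μstar = μstar) :
    l1 (fun x => μstar x - μhat x)
        ≤ 2 * Real.sqrt (Fintype.card A) * (1 - γ) * Real.exp (-φ * δ)
            / ((Lf + (γ / (1 - γ)) * Lp * fnorm) * (φmax - φ))
    ∧ supQ (fun x a => Qstar μstar x a - Qstar μhat x a)
        ≤ 2 * Real.sqrt (Fintype.card A) * Real.exp (-φ * δ) / (φmax - φ) :=
  mfg_accuracy_general γ hγ0 hγ1 f fnorm hf p hp0 hp1 cmin Lf Lp hcmin hLf hLp hLpc φmax hφmaxdef φ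
    hφ0 hφmax Qstar hQstar μhat hμhat hμhatfix δ hgap μstar hμstar hμstarfix
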